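/- arXiv:1907.00862 — 2 statements merged into one kernel-verified Lean document; each statement's English description precedes it below -/
import Mathlib

section
/- If S ⊆ E consists of three even vertices of Q_d whose pairwise Hamming distances are all 2 (a triangle in the distance-2 graph), then |N(S)| = 3d − 5; if S consists of three even vertices forming a path in the distance-2 graph (two pairs at distance 2, one pair at distance 4), then |N(S)| = 3d − 4. -/
open Finset

/-- The hypercube graph `Q_d` on `{0,1}^d`: vertices adjacent iff they differ in
exactly one coordinate. -/
def cubeGraph (d : ℕ) : SimpleGraph (Fin d → Bool) where
  Adj x y := hammingDist x y = 1
  symm := ⟨fun x y (h : hammingDist x y = 1) => (hammingDist_comm y x).trans h⟩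
  loopless := ⟨fun x (h : hammingDist x x = 1) => by simp [hammingDist_self] at h⟩

/-- The distance-2 graph on `{0,1}^d`: vertices adjacent iff Hamming distance 2. -/
def distTwoGraph (d : ℕ) : SimpleGraph (Fin d → Bool) where
  Adj x y := hammingDist x y = 2
  symm := ⟨fun x y (h : hammingDist x y = 2) => (hammingDist_comm y x).trans h⟩
  loopless := ⟨fun x (h : hammingDist x x = 2) => by simp [hammingDist_self] at h⟩

/-- The even side `E` of the bipartition of `Q_d`. -/
def evenFinset (d : ℕ) : Finset (Fin d → Bool) :=
  Finset.univ.filter fun x => Even (∑ i, if x i then 1 else 0 : ℕ)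

/-- The odd side `O` of the bipartition of `Q_d`. -/
def oddFinset (d : ℕ) : Finset (Fin d → Bool) :=
  Finset.univ.filter fun x => ¬ Even (∑ i, if x i then 1 else 0 : ℕ)

/-- The neighbourhood `N(A)` of a set of vertices in `Q_d`. -/
def nbhd (d : ℕ) (A : Finset (Fin d → Bool)) : Finset (Fin d → Bool) :=
  A.biUnion fun x => Finset.univ.filter fun y => hammingDist x y = 1

/-- `S` is 2-linked: connected in the square of `Q_d` (for `S` inside one side of the
bipartition this is connectivity in the distance-2 graph). -/
def TwoLinked (d : ℕ) (S : Finset (Fin d → Bool)) : Prop :=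
  ((distTwoGraph d).induce (S : Set (Fin d → Bool))).Connected


section helpers
variable {d : ℕ}

private def flipv (v : Fin d → Bool) (i : Fin d) : Fin d → Bool := Function.update v i (!v i)

private def dset (x y : Fin d → Bool) : Finset (Fin d) := univ.filter fun i => x i ≠ y i

private lemma hd_eq (x y : Fin d → Bool) : hammingDist x y = (dset x y).card := rfl

private lemma flip_self (v : Fin d → Bool) (i : Fin d) : flipv v i i = !v i :=
  Function.update_self _ _ _

private lemma flip_ne (v : Fin d → Bool) {i j : Fin d} (h : j ≠ i) : flipv v i j = v j :=
  Function.update_of_ne h _ _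

private lemma flip_inj (v : Fin d → Bool) : Function.Injective (flipv v) := by
  intro i j h
  by_contra hne
  have h1 := congrFun h i
  rw [flip_self, flip_ne v hne] at h1
  simp at h1

private lemma mem_sphere_iff {v w : Fin d → Bool} : hammingDist v w = 1 ↔ ∃ i, w = flipv v i := by
  constructor
  · intro h
    rw [hd_eq, Finset.card_eq_one] at h
    obtain ⟨i, hi⟩ := h
    refine ⟨i, funext fun j => ?_⟩
    by_cases hj : j = i
    · subst hj
      have hm : j ∈ dset v w := hi ▸ mem_singleton_self j
      simp only [dset, mem_filter, mem_univ, true_and] at hm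
      rw [flip_self]
      cases hv : v j <;> cases hw : w j <;> simp_all
    · have hm : j ∉ dset v w := by rw [hi]; simp [hj]
      simp only [dset, mem_filter, mem_univ, true_and, not_not] at hm
      rw [flip_ne v hj]
      exact hm.symm
  · rintro ⟨i, rfl⟩
    rw [hd_eq]
    have hs : dset v (flipv v i) = {i} := by
      ext j
      by_cases hj : j = i
      · subst hj; simp [dset, flip_self]
      · simp [dset, flip_ne v hj, hj]
    rw [hs]; simp

private lemma dset_flip (v y : Fin d → Bool) (i : Fin d) :
    dset (flipv v i) y = symmDiff (dset v y) {i} := by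
  ext j
  by_cases hj : j = i
  · subst hj
    simp only [dset, mem_filter, mem_univ, true_and, Finset.mem_symmDiff, mem_singleton,
      flip_self]
    cases hv : v j <;> cases hy : y j <;> simp
  · simp only [dset, mem_filter, mem_univ, true_and, Finset.mem_symmDiff, mem_singleton,
      flip_ne v hj, hj]
    tauto

private lemma flip_dist_one_iff {v y : Fin d → Bool} (h : hammingDist v y = 2) (i : Fin d) :
    hammingDist (flipv v i) y = 1 ↔ i ∈ dset v y := by
  rw [hd_eq v y] at h
  rw [hd_eq, dset_flip]
  by_cases hi : i ∈ dset v y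
  · have : symmDiff (dset v y) {i} = (dset v y).erase i := by
      ext j
      simp only [Finset.mem_symmDiff, mem_singleton, mem_erase]
      constructor
      · rintro (⟨hj, hne⟩ | ⟨rfl, hni⟩)
        · exact ⟨hne, hj⟩
        · exact absurd hi hni
      · rintro ⟨hne, hj⟩; exact Or.inl ⟨hj, hne⟩
    rw [this, card_erase_of_mem hi, h]
    simp [hi]
  · have : symmDiff (dset v y) {i} = insert i (dset v y) := by
      ext j
      simp only [Finset.mem_symmDiff, mem_singleton, mem_insert]
      constructor
      · rintro (⟨hj, _⟩ | ⟨rfl, _⟩) <;> tauto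
      · rintro (rfl | hj)
        · exact Or.inr ⟨rfl, hi⟩
        · exact Or.inl ⟨hj, fun e => hi (e ▸ hj)⟩
    rw [this, card_insert_of_notMem hi, h]
    simp [hi]

private lemma sphere_inter {u v : Fin d → Bool} (h : hammingDist u v = 2) :
    (univ.filter fun w => hammingDist u w = 1) ∩ (univ.filter fun w => hammingDist v w = 1)
      = (dset u v).image (flipv u) := by
  ext w
  simp only [mem_inter, mem_filter, mem_univ, true_and, mem_image]
  constructor
  · rintro ⟨h1, h2⟩
    obtain ⟨i, rfl⟩ := mem_sphere_iff.mp h1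
    rw [hammingDist_comm] at h2
    exact ⟨i, (flip_dist_one_iff h i).mp h2, rfl⟩
  · rintro ⟨i, hi, rfl⟩
    refine ⟨mem_sphere_iff.mpr ⟨i, rfl⟩, ?_⟩
    rw [hammingDist_comm]
    exact (flip_dist_one_iff h i).mpr hi

private lemma sphere_inter_empty {u v : Fin d → Bool} (h : hammingDist u v = 4) :
    (univ.filter fun w => hammingDist u w = 1) ∩ (univ.filter fun w => hammingDist v w = 1)
      = ∅ := by
  ext w
  simp only [mem_inter, mem_filter, mem_univ, true_and, notMem_empty, iff_false, not_and]
  intro h1 h2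
  have := hammingDist_triangle u w v
  rw [h, h1, hammingDist_comm w v] at this
  omega

private lemma dset_trans (x y z : Fin d → Bool) :
    dset x z = symmDiff (dset x y) (dset y z) := by
  ext j
  simp only [dset, mem_filter, mem_univ, true_and, Finset.mem_symmDiff]
  cases hx : x j <;> cases hy : y j <;> cases hz : z j <;> simp

end helpers


section main
variable {d : ℕ}

private lemma sphere_card (v : Fin d → Bool) :
    (univ.filter fun w => hammingDist v w = 1).card = d := by
  have h : (univ.filter fun w => hammingDist v w = 1) = univ.image (flipv v) := by
    ext w
    simp only [mem_filter, mem_univ, true_and, mem_image]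
    rw [mem_sphere_iff]
    constructor
    · rintro ⟨i, rfl⟩; exact ⟨i, rfl⟩
    · rintro ⟨i, rfl⟩; exact ⟨i, rfl⟩
  rw [h, card_image_of_injective _ (flip_inj v), card_univ, Fintype.card_fin]

private lemma dinter_card {x y z : Fin d → Bool} (hxy : hammingDist x y = 2)
    (hyz : hammingDist y z = 2) (hxz : hammingDist x z = 2) :
    (dset x y ∩ dset x z).card = 1 := by
  have ht : dset x z = symmDiff (dset x y) (dset y z) := dset_trans x y z
  set A := dset x y with hA
  set B := dset y z with hB
  have h1 : A ∩ dset x z = A \ B := by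
    rw [ht]
    ext j
    simp only [mem_inter, Finset.mem_symmDiff, mem_sdiff]
    tauto
  have h2 : symmDiff A B = (A \ B) ∪ (B \ A) := by
    ext j; simp only [Finset.mem_symmDiff, mem_union, mem_sdiff]
  have c1 : (A \ B).card + (A ∩ B).card = A.card := card_sdiff_add_card_inter A B
  have c2 : (B \ A).card + (B ∩ A).card = B.card := card_sdiff_add_card_inter B A
  have c3 : (A \ B).card + (B \ A).card = 2 := by
    rw [← card_union_of_disjoint (disjoint_sdiff_sdiff), ← h2, ← ht, ← hd_eq, hxz]
  have cA : A.card = 2 := by rw [hA, ← hd_eq, hxy]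
  have cB : B.card = 2 := by rw [hB, ← hd_eq, hyz]
  have ci : (A ∩ B).card = (B ∩ A).card := by rw [inter_comm]
  rw [h1]
  omega

end main

/-- Neighbourhood sizes of 2-linked triples: a triangle in the distance-2 graph has
`|N(S)| = 3d − 5`; an induced path (distances 2,2,4) has `|N(S)| = 3d − 4`. -/
theorem nbhd_card_triples (d : ℕ) (x y z : Fin d → Bool) (hx : x ∈ evenFinset d)
    (hy : y ∈ evenFinset d) (hz : z ∈ evenFinset d) :
    (hammingDist x y = 2 → hammingDist y z = 2 → hammingDist x z = 2 →
      (nbhd d {x, y, z}).card = 3 * d - 5) ∧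
    (hammingDist x y = 2 → hammingDist y z = 2 → hammingDist x z = 4 →
      (nbhd d {x, y, z}).card = 3 * d - 4) := by
  set Sx := univ.filter fun w => hammingDist x w = 1 with hSx
  set Sy := univ.filter fun w => hammingDist y w = 1 with hSy
  set Sz := univ.filter fun w => hammingDist z w = 1 with hSz
  have hn : nbhd d {x, y, z} = Sx ∪ (Sy ∪ Sz) := by
    simp [nbhd, Finset.biUnion_insert, hSx, hSy, hSz]
  have cx : Sx.card = d := sphere_card x
  have cy : Sy.card = d := sphere_card y
  have cz : Sz.card = d := sphere_card z
  have e1 := card_union_add_card_inter Sx (Sy ∪ Sz)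
  have e2 := card_union_add_card_inter Sy Sz
  have e3 : Sx ∩ (Sy ∪ Sz) = (Sx ∩ Sy) ∪ (Sx ∩ Sz) := inter_union_distrib_left Sx Sy Sz
  have e4 := card_union_add_card_inter (Sx ∩ Sy) (Sx ∩ Sz)
  rw [e3] at e1
  constructor
  · intro hxy hyz hxz
    have hd2 : 2 ≤ d := by
      have h := hammingDist_le_card_fintype (x := x) (y := y)
      rw [Fintype.card_fin] at h; omega
    have cxy : (Sx ∩ Sy).card = 2 := by
      rw [hSx, hSy, sphere_inter hxy, card_image_of_injective _ (flip_inj x), ← hd_eq, hxy]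
    have cyz : (Sy ∩ Sz).card = 2 := by
      rw [hSy, hSz, sphere_inter hyz, card_image_of_injective _ (flip_inj y), ← hd_eq, hyz]
    have cxz : (Sx ∩ Sz).card = 2 := by
      rw [hSx, hSz, sphere_inter hxz, card_image_of_injective _ (flip_inj x), ← hd_eq, hxz]
    have ct : ((Sx ∩ Sy) ∩ (Sx ∩ Sz)).card = 1 := by
      rw [hSx, hSy, hSz, sphere_inter hxy, sphere_inter hxz,
        ← Finset.image_inter _ _ (flip_inj x), card_image_of_injective _ (flip_inj x)]
      exact dinter_card hxy hyz hxz
    rw [hn]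
    omega
  · intro hxy hyz hxz
    have hd4 : 4 ≤ d := by
      have h := hammingDist_le_card_fintype (x := x) (y := z)
      rw [Fintype.card_fin] at h; omega
    have cxy : (Sx ∩ Sy).card = 2 := by
      rw [hSx, hSy, sphere_inter hxy, card_image_of_injective _ (flip_inj x), ← hd_eq, hxy]
    have cyz : (Sy ∩ Sz).card = 2 := by
      rw [hSy, hSz, sphere_inter hyz, card_image_of_injective _ (flip_inj y), ← hd_eq, hyz]
    have cxz : (Sx ∩ Sz) = ∅ := by rw [hSx, hSz]; exact sphere_inter_empty hxz
    have cxz' : (Sx ∩ Sz).card = 0 := by rw [cxz]; rfl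
    have ct : ((Sx ∩ Sy) ∩ (Sx ∩ Sz)).card = 0 := by rw [cxz, inter_empty]; rfl
    rw [hn]
    omega
end

section
/- Let T be a defect type of size t (a fixed isomorphism type of connected graph realizable as Q_d²[S] for a 2-linked S ⊆ E), and assume there exists at least one polymer of type T. Then 2^{d−1}/t ≤ n_T ≤ (2^{d−1}/t)(e·d²)^{t−1}, where n_T is the number of 2-linked subsets S ⊆ E with Q_d²[S] ≅ T. -/
set_option linter.unusedSectionVars false
set_option maxHeartbeats 1000000

open Finset

namespace DefectAux


section Abstract

variable {α : Type*} [DecidableEq α] [LinearOrder α] {β : Type*} [DecidableEq β]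
variable (adj : α → α → Prop) [DecidableRel adj]

/-- crossing property abstracted from connectivity -/
def Linked (S : Finset α) (v : α) : Prop :=
  ∀ P ⊆ S, v ∈ P → P ≠ S → ∃ w ∈ S, w ∉ P ∧ ∃ u ∈ P, adj u w

variable (S : Finset α) (v : α)

def nextA (L : List α) : Finset α := S.filter (fun w => w ∉ L ∧ ∃ u ∈ L, adj u w)

def buildL : ℕ → List α
  | 0 => [v]
  | (k+1) =>
    let L := buildL k
    if h : (nextA adj S L).Nonempty then L ++ [(nextA adj S L).min' h] else L

lemma buildL_succ (k : ℕ) :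
    buildL adj S v (k+1) =
      if h : (nextA adj S (buildL adj S v k)).Nonempty then
        buildL adj S v k ++ [(nextA adj S (buildL adj S v k)).min' h]
      else buildL adj S v k := rfl

lemma buildL_prefix_succ (k : ℕ) : buildL adj S v k <+: buildL adj S v (k+1) := by
  rw [buildL_succ]
  split_ifs with h
  · exact ⟨_, rfl⟩
  · exact List.prefix_rfl

lemma buildL_prefix {k m : ℕ} (h : k ≤ m) : buildL adj S v k <+: buildL adj S v m := by
  induction m with
  | zero => rw [Nat.le_zero.1 h]
  | succ m ih =>
    rcases Nat.lt_or_ge k (m+1) with h' | h'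
    · exact (ih (Nat.lt_succ_iff.1 h')).trans (buildL_prefix_succ adj S v m)
    · rw [Nat.le_antisymm h h']

lemma mem_buildL_self (k : ℕ) : v ∈ buildL adj S v k := by
  have := (buildL_prefix adj S v (Nat.zero_le k)).subset
  exact this (by simp [buildL])

lemma buildL_subset (hv : v ∈ S) (k : ℕ) : ∀ w ∈ buildL adj S v k, w ∈ S := by
  induction k with
  | zero => intro w hw; simp [buildL] at hw; subst hw; exact hv
  | succ k ih =>
    intro w hw
    rw [buildL_succ] at hw
    split_ifs at hw with h
    · rcases List.mem_append.1 hw with h' | h'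
      · exact ih w h'
      · simp at h'
        subst h'
        exact (Finset.mem_filter.1 (Finset.min'_mem _ h)).1
    · exact ih w hw

lemma buildL_nodup (k : ℕ) : (buildL adj S v k).Nodup := by
  induction k with
  | zero => simp [buildL]
  | succ k ih =>
    rw [buildL_succ]
    split_ifs with h
    · rw [List.nodup_append]
      refine ⟨ih, List.nodup_singleton _, ?_⟩
      intro a ha b hb heq
      simp at hb
      subst hb
      subst heq
      exact ((Finset.mem_filter.1 (Finset.min'_mem _ h)).2.1 ha).elim
    · exact ih

lemma buildL_adj_back (k : ℕ) : ∀ w ∈ buildL adj S v k, w ≠ v →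
    ∃ u ∈ buildL adj S v k, adj u w := by
  induction k with
  | zero => intro w hw hne; simp [buildL] at hw; exact (hne hw).elim
  | succ k ih =>
    intro w hw hne
    rw [buildL_succ] at hw ⊢
    split_ifs at hw ⊢ with h
    · rcases List.mem_append.1 hw with h' | h'
      · obtain ⟨u, hu, hadj⟩ := ih w h' hne
        exact ⟨u, List.mem_append.2 (Or.inl hu), hadj⟩
      · simp at h'
        subst h'
        obtain ⟨-, -, u, hu, hadj⟩ := Finset.mem_filter.1 (Finset.min'_mem _ h)
        exact ⟨u, List.mem_append.2 (Or.inl hu), hadj⟩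
    · exact ih w hw hne

lemma buildL_length (hv : v ∈ S) (hlink : Linked adj S v) (k : ℕ) :
    (buildL adj S v k).length = min (k+1) S.card := by
  induction k with
  | zero =>
    have : 1 ≤ S.card := Finset.card_pos.2 ⟨v, hv⟩
    simp only [buildL, List.length_singleton, Nat.min_def]
    split_ifs <;> omega
  | succ k ih =>
    by_cases hLS : (buildL adj S v k).toFinset = S
    · have hempty : ¬ (nextA adj S (buildL adj S v k)).Nonempty := by
        rintro ⟨w, hw⟩
        obtain ⟨hwS, hwL, -⟩ := Finset.mem_filter.1 hw
        exact hwL (List.mem_toFinset.1 (by rw [hLS]; exact hwS))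
      rw [buildL_succ, dif_neg hempty]
      have hcard : S.card = (buildL adj S v k).length := by
        rw [← List.toFinset_card_of_nodup (buildL_nodup adj S v k), hLS]
      rw [Nat.min_def] at ih ⊢
      split_ifs at ih ⊢ <;> omega
    · have hsub : (buildL adj S v k).toFinset ⊆ S := fun w hw =>
        buildL_subset adj S v hv k w (List.mem_toFinset.1 hw)
      obtain ⟨w, hwS, hwP, u, hu, hadj⟩ := hlink _ hsub
        (List.mem_toFinset.2 (mem_buildL_self adj S v k)) hLS
      have hne : (nextA adj S (buildL adj S v k)).Nonempty :=
        ⟨w, Finset.mem_filter.2 ⟨hwS, fun hc => hwP (List.mem_toFinset.2 hc),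
          u, List.mem_toFinset.1 hu, hadj⟩⟩
      rw [buildL_succ, dif_pos hne, List.length_append]
      have hlt : (buildL adj S v k).toFinset.card < S.card :=
        Finset.card_lt_card (lt_of_le_of_ne hsub hLS)
      rw [List.toFinset_card_of_nodup (buildL_nodup adj S v k)] at hlt
      simp only [List.length_singleton]
      rw [Nat.min_def] at ih ⊢
      split_ifs at ih ⊢ <;> omega


lemma buildL_length_le (hv : v ∈ S) (hlink : Linked adj S v) (k : ℕ) :
    (buildL adj S v k).length ≤ S.card := by
  rw [buildL_length adj S v hv hlink k]; exact Nat.min_le_right _ _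

/-- every stage is a prefix of the full list -/
lemma buildL_prefix_full (hv : v ∈ S) (hlink : Linked adj S v) (k : ℕ) :
    buildL adj S v k <+: buildL adj S v (S.card - 1) := by
  rcases le_or_gt k (S.card - 1) with h | h
  · exact buildL_prefix adj S v h
  · have h1 : 1 ≤ S.card := Finset.card_pos.2 ⟨v, hv⟩
    have hp := buildL_prefix adj S v (Nat.le_of_lt h)
    have : buildL adj S v (S.card - 1) = buildL adj S v k := by
      refine hp.eq_of_length ?_
      rw [buildL_length adj S v hv hlink, buildL_length adj S v hv hlink]
      omega
    rw [← this]

lemma buildL_toFinset_full (hv : v ∈ S) (hlink : Linked adj S v) :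
    (buildL adj S v (S.card - 1)).toFinset = S := by
  have h1 : 1 ≤ S.card := Finset.card_pos.2 ⟨v, hv⟩
  apply Finset.eq_of_subset_of_card_le
  · intro w hw; exact buildL_subset adj S v hv _ w (List.mem_toFinset.1 hw)
  · rw [List.toFinset_card_of_nodup (buildL_nodup adj S v _),
      buildL_length adj S v hv hlink]
    omega

lemma getD_of_prefix {L M : List α} (w : α) (h : L <+: M) {j : ℕ} (hj : j < L.length) :
    M.getD j w = L.getD j w := by
  obtain ⟨s, rfl⟩ := h
  rw [List.getD_eq_getElem _ _ hj, List.getD_eq_getElem _ _ (by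
    rw [List.length_append]; omega)]
  exact List.getElem_append_left hj

/-- candidate parent indices of `w` w.r.t. list `L` -/
def Jset (L : List α) (w : α) : Finset ℕ :=
  (Finset.range L.length).filter (fun j => adj (L.getD j v) w)

noncomputable def pIdx (L : List α) (w : α) : ℕ :=
  if h : (Jset adj v L w).Nonempty then (Jset adj v L w).min' h else 0

lemma Jset_nonempty_of (hv : v ∈ S) (hlink : Linked adj S v) {w : α} (hw : w ∈ S)
    (hne : w ≠ v) : (Jset adj v (buildL adj S v (S.card - 1)) w).Nonempty := by
  set L := buildL adj S v (S.card - 1) with hL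
  have hwL : w ∈ L := by
    rw [← List.mem_toFinset, buildL_toFinset_full adj S v hv hlink]; exact hw
  obtain ⟨u, hu, hadj⟩ := buildL_adj_back adj S v _ w hwL hne
  refine ⟨List.idxOf u L, Finset.mem_filter.2 ⟨Finset.mem_range.2
    (List.idxOf_lt_length_iff.2 hu), ?_⟩⟩
  rw [List.getD_eq_getElem _ _ (List.idxOf_lt_length_iff.2 hu), List.getElem_idxOf]
  exact hadj

lemma pIdx_mem {L : List α} {w : α} (h : (Jset adj v L w).Nonempty) :
    pIdx adj v L w ∈ Jset adj v L w := by
  rw [pIdx, dif_pos h]; exact Finset.min'_mem _ h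

lemma pIdx_min {L : List α} {w : α} (h : (Jset adj v L w).Nonempty)
    {j : ℕ} (hj : j ∈ Jset adj v L w) : pIdx adj v L w ≤ j := by
  rw [pIdx, dif_pos h]; exact Finset.min'_le _ _ hj

variable (σ : α → α → β) (dec : α → β → α)

/-- the encoding of `S` -/
noncomputable def code : Finset (ℕ × β) :=
  (S.erase v).image (fun w =>
    (pIdx adj v (buildL adj S v (S.card - 1)) w,
     σ ((buildL adj S v (S.card - 1)).getD (pIdx adj v (buildL adj S v (S.card - 1)) w) v) w))

lemma code_spec (hdec : ∀ x y, adj x y → dec x (σ x y) = y)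
    (hv : v ∈ S) (hlink : Linked adj S v) {w : α} (hw : w ∈ S.erase v) :
    pIdx adj v (buildL adj S v (S.card - 1)) w ∈
      Jset adj v (buildL adj S v (S.card - 1)) w ∧
    dec ((buildL adj S v (S.card - 1)).getD
        (pIdx adj v (buildL adj S v (S.card - 1)) w) v)
      (σ ((buildL adj S v (S.card - 1)).getD
        (pIdx adj v (buildL adj S v (S.card - 1)) w) v) w) = w := by
  obtain ⟨hne, hwS⟩ := Finset.mem_erase.1 hw
  have hJ := Jset_nonempty_of adj S v hv hlink hwS hne
  have hmem := pIdx_mem adj v hJ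
  refine ⟨hmem, ?_⟩
  obtain ⟨-, hadj⟩ := Finset.mem_filter.1 hmem
  exact hdec _ _ hadj

lemma code_card (hdec : ∀ x y, adj x y → dec x (σ x y) = y)
    (hv : v ∈ S) (hlink : Linked adj S v) : (code adj S v σ).card = S.card - 1 := by
  rw [code, Finset.card_image_of_injOn, Finset.card_erase_of_mem hv]
  intro w hw w' hw' heq
  obtain ⟨h1, h2⟩ := code_spec adj S v σ dec hdec hv hlink hw
  obtain ⟨h1', h2'⟩ := code_spec adj S v σ dec hdec hv hlink hw'
  have hfst : pIdx adj v (buildL adj S v (S.card - 1)) w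
      = pIdx adj v (buildL adj S v (S.card - 1)) w' := congrArg Prod.fst heq
  have hsnd := congrArg Prod.snd heq
  simp only [hfst] at h2 hsnd
  rw [← h2, hsnd, h2']

lemma code_subset (hdec : ∀ x y, adj x y → dec x (σ x y) = y)
    (hv : v ∈ S) (hlink : Linked adj S v)
    (Bs : Finset β) (hB : ∀ x y, adj x y → σ x y ∈ Bs) :
    code adj S v σ ⊆ (Finset.range S.card) ×ˢ Bs := by
  intro p hp
  obtain ⟨w, hw, rfl⟩ := Finset.mem_image.1 hp
  obtain ⟨h1, -⟩ := code_spec adj S v σ dec hdec hv hlink hw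
  obtain ⟨hlt, hadj⟩ := Finset.mem_filter.1 h1
  refine Finset.mem_product.2 ⟨Finset.mem_range.2 ?_, hB _ _ hadj⟩
  have := Finset.mem_range.1 hlt
  calc pIdx adj v (buildL adj S v (S.card - 1)) w
      < (buildL adj S v (S.card - 1)).length := this
    _ ≤ S.card := buildL_length_le adj S v hv hlink _

/-- decoded frontier from a code and a current list -/
noncomputable def Wset (c : Finset (ℕ × β)) (L : List α) : Finset α :=
  ((c.filter (fun p => p.1 < L.length)).image
    (fun p => dec (L.getD p.1 v) p.2)).filter (fun x => x ∉ L)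

lemma W_subset_A (hdec' : ∀ x y, adj x y → dec x (σ x y) = y)
    (hv : v ∈ S) (hlink : Linked adj S v) (k : ℕ) :
    Wset v dec (code adj S v σ) (buildL adj S v k) ⊆ nextA adj S (buildL adj S v k) := by
  intro x hx
  set L := buildL adj S v k with hLdef
  obtain ⟨hx1, hx2⟩ := Finset.mem_filter.1 hx
  obtain ⟨p, hp, rfl⟩ := Finset.mem_image.1 hx1
  obtain ⟨hpc, hplt⟩ := Finset.mem_filter.1 hp
  obtain ⟨w, hw, rfl⟩ := Finset.mem_image.1 hpc
  have hpre : L <+: buildL adj S v (S.card - 1) := buildL_prefix_full adj S v hv hlink k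
  simp only at hplt hx2 ⊢
  have hgetD : L.getD (pIdx adj v (buildL adj S v (S.card - 1)) w) v
      = (buildL adj S v (S.card - 1)).getD (pIdx adj v (buildL adj S v (S.card - 1)) w) v :=
    (getD_of_prefix v hpre hplt).symm
  obtain ⟨h1, h2⟩ := code_spec adj S v σ dec hdec' hv hlink hw
  rw [hgetD, h2] at hx2 ⊢
  obtain ⟨-, hadj⟩ := Finset.mem_filter.1 h1
  refine Finset.mem_filter.2 ⟨(Finset.mem_erase.1 hw).2, hx2, ?_⟩
  refine ⟨L.getD (pIdx adj v (buildL adj S v (S.card - 1)) w) v, ?_, ?_⟩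
  · rw [List.getD_eq_getElem _ _ hplt]
    exact List.getElem_mem _
  · rw [hgetD]; exact hadj

lemma minA_mem_W (hdec' : ∀ x y, adj x y → dec x (σ x y) = y)
    (hv : v ∈ S) (hlink : Linked adj S v) (k : ℕ) (h : (nextA adj S (buildL adj S v k)).Nonempty) :
    (nextA adj S (buildL adj S v k)).min' h ∈
      Wset v dec (code adj S v σ) (buildL adj S v k) := by
  set L := buildL adj S v k with hLdef
  set Lf := buildL adj S v (S.card - 1) with hLfdef
  have hpre : L <+: Lf := buildL_prefix_full adj S v hv hlink k
  obtain ⟨hwS, hwL, u, hu, hadj⟩ := Finset.mem_filter.1 (Finset.min'_mem _ h)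
  set w := (nextA adj S L).min' h
  have hne : w ≠ v := fun hc => hwL (hc ▸ mem_buildL_self adj S v k)
  have hwE : w ∈ S.erase v := Finset.mem_erase.2 ⟨hne, hwS⟩
  obtain ⟨h1, h2⟩ := code_spec adj S v σ dec hdec' hv hlink hwE
  -- the parent index is < L.length
  have huLf : u ∈ Lf := hpre.subset hu
  have hiu : List.idxOf u Lf < Lf.length := List.idxOf_lt_length_iff.2 huLf
  have hidx : List.idxOf u Lf = List.idxOf u L := by
    obtain ⟨s, hs⟩ := hpre
    rw [← hs]; exact List.idxOf_append_of_mem hu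
  have hiuL : List.idxOf u Lf < L.length := by
    rw [hidx]; exact List.idxOf_lt_length_iff.2 hu
  have hmemJ : List.idxOf u Lf ∈ Jset adj v Lf w := by
    refine Finset.mem_filter.2 ⟨Finset.mem_range.2 hiu, ?_⟩
    rw [List.getD_eq_getElem _ _ hiu, List.getElem_idxOf]
    exact hadj
  have hJne : (Jset adj v Lf w).Nonempty := ⟨_, hmemJ⟩
  have hplt : pIdx adj v Lf w < L.length :=
    lt_of_le_of_lt (pIdx_min adj v hJne hmemJ) hiuL
  refine Finset.mem_filter.2 ⟨Finset.mem_image.2 ⟨(pIdx adj v Lf w,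
    σ (Lf.getD (pIdx adj v Lf w) v) w), Finset.mem_filter.2 ⟨?_, hplt⟩, ?_⟩, hwL⟩
  · exact Finset.mem_image.2 ⟨w, hwE, rfl⟩
  · rw [getD_of_prefix v hpre hplt] at h2 ⊢
    exact h2


lemma buildL_eq_of_code_eq (S S' : Finset α) (v : α) (σ : α → α → β) (dec : α → β → α)
    (hdec' : ∀ x y, adj x y → dec x (σ x y) = y)
    (hv : v ∈ S) (hlink : Linked adj S v) (hv' : v ∈ S') (hlink' : Linked adj S' v)
    (hcode : code adj S v σ = code adj S' v σ) :
    ∀ k, buildL adj S v k = buildL adj S' v k := by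
  intro k
  induction k with
  | zero => rfl
  | succ k ih =>
    have hA'W := W_subset_A adj S' v σ dec hdec' hv' hlink' k
    have hm' := minA_mem_W adj S' v σ dec hdec' hv' hlink' k
    rw [← ih, ← hcode] at hA'W hm'
    have hAW := W_subset_A adj S v σ dec hdec' hv hlink k
    have hm := minA_mem_W adj S v σ dec hdec' hv hlink k
    rw [buildL_succ adj S v k, buildL_succ adj S' v k, ← ih]
    by_cases hA : (nextA adj S (buildL adj S v k)).Nonempty
    · have h1 := hm hA
      have hA' : (nextA adj S' (buildL adj S v k)).Nonempty := ⟨_, hA'W h1⟩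
      rw [dif_pos hA, dif_pos hA']
      have e : (nextA adj S (buildL adj S v k)).min' hA
          = (nextA adj S' (buildL adj S v k)).min' hA' :=
        le_antisymm (Finset.min'_le _ _ (hAW (hm' hA'))) (Finset.min'_le _ _ (hA'W h1))
      rw [e]
    · have hA' : ¬ (nextA adj S' (buildL adj S v k)).Nonempty := fun h =>
        hA ⟨_, hAW (hm' h)⟩
      rw [dif_neg hA, dif_neg hA']

lemma eq_of_code_eq (S S' : Finset α) (v : α) (σ : α → α → β) (dec : α → β → α)
    (hdec' : ∀ x y, adj x y → dec x (σ x y) = y)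
    (hv : v ∈ S) (hlink : Linked adj S v) (hv' : v ∈ S') (hlink' : Linked adj S' v)
    (hcode : code adj S v σ = code adj S' v σ) : S = S' := by
  have hcards : S.card = S'.card := by
    have h1 := code_card adj S v σ dec hdec' hv hlink
    have h2 := code_card adj S' v σ dec hdec' hv' hlink'
    rw [hcode] at h1
    have c1 : 1 ≤ S.card := Finset.card_pos.2 ⟨v, hv⟩
    have c2 : 1 ≤ S'.card := Finset.card_pos.2 ⟨v, hv'⟩
    omega
  rw [← buildL_toFinset_full adj S v hv hlink, ← buildL_toFinset_full adj S' v hv' hlink',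
    ← hcards, buildL_eq_of_code_eq adj S S' v σ dec hdec' hv hlink hv' hlink' hcode]

theorem card_family_le (v : α) (t : ℕ) (σ : α → α → β) (dec : α → β → α)
    (hdec' : ∀ x y, adj x y → dec x (σ x y) = y)
    (Bs : Finset β) (hB : ∀ x y, adj x y → σ x y ∈ Bs)
    (𝒮 : Finset (Finset α))
    (h𝒮 : ∀ S ∈ 𝒮, v ∈ S ∧ S.card = t ∧ Linked adj S v) :
    𝒮.card ≤ (t * Bs.card).choose (t - 1) := by
  have key : 𝒮.card ≤ (Finset.powersetCard (t-1) ((Finset.range t) ×ˢ Bs)).card := by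
    apply Finset.card_le_card_of_injOn (fun S => code adj S v σ)
    · intro S hS
      obtain ⟨hv, hcard, hlink⟩ := h𝒮 S hS
      refine Finset.mem_powersetCard.2 ⟨?_, ?_⟩
      · have := code_subset adj S v σ dec hdec' hv hlink Bs hB
        rwa [hcard] at this
      · rw [code_card adj S v σ dec hdec' hv hlink, hcard]
    · intro S hS S' hS' hcode
      obtain ⟨hv1, hc1, hl1⟩ := h𝒮 S (Finset.mem_coe.1 hS)
      obtain ⟨hv2, hc2, hl2⟩ := h𝒮 S' (Finset.mem_coe.1 hS')
      exact eq_of_code_eq adj S S' v σ dec hdec' hv1 hl1 hv2 hl2 hcode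
  rw [Finset.card_powersetCard, Finset.card_product, Finset.card_range] at key
  exact key

end Abstract


variable {d : ℕ}

/-- the symbol of an adjacent pair: the set of flipped coordinates -/
def flips (x y : Fin d → Bool) : Finset (Fin d) :=
  Finset.univ.filter (fun i => x i ≠ y i)

def unflip (x : Fin d → Bool) (F : Finset (Fin d)) : Fin d → Bool :=
  fun i => if i ∈ F then !(x i) else x i

lemma unflip_flips (x y : Fin d → Bool) : unflip x (flips x y) = y := by
  funext i
  simp only [unflip, flips, Finset.mem_filter, Finset.mem_univ, true_and]
  by_cases h : x i = y i
  · simp [h]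
  · rw [if_pos h]
    cases hx : x i <;> cases hy : y i <;> simp_all

lemma card_flips (x y : Fin d → Bool) : (flips x y).card = hammingDist x y := rfl

lemma linked_of_twoLinked (S : Finset (Fin d → Bool)) (hS : TwoLinked d S)
    (v : Fin d → Bool) (hv : v ∈ S) :
    Linked (fun x y => hammingDist x y = 2) S v := by
  intro P hP hvP hPS
  have hex : ∃ w0, w0 ∈ S ∧ w0 ∉ P := by
    by_contra hc
    push_neg at hc
    exact hPS (Finset.Subset.antisymm hP (fun w hw => hc w hw))
  obtain ⟨w0, hw0S, hw0P⟩ := hex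
  obtain ⟨walk⟩ := hS.preconnected ⟨v, by exact_mod_cast hv⟩ ⟨w0, by exact_mod_cast hw0S⟩
  obtain ⟨dart, -, hfst, hsnd⟩ := walk.exists_boundary_dart
    {x : ↥(S : Set (Fin d → Bool)) | (x : Fin d → Bool) ∈ P} hvP hw0P
  have hadj : (distTwoGraph d).Adj (dart.toProd.1 : Fin d → Bool)
      (dart.toProd.2 : Fin d → Bool) := dart.adj
  refine ⟨(dart.toProd.2 : Fin d → Bool), ?_, hsnd, (dart.toProd.1 : Fin d → Bool), hfst, ?_⟩
  · exact_mod_cast (dart.toProd.2).2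
  · exact hadj

open scoped Classical in
theorem count_through_vertex (d t : ℕ) (v : Fin d → Bool) :
    (Finset.univ.filter (fun S : Finset (Fin d → Bool) =>
        v ∈ S ∧ S.card = t ∧ TwoLinked d S)).card
      ≤ (t * (Nat.choose d 2)).choose (t - 1) := by
  classical
  letI : LinearOrder (Fin d → Bool) :=
    LinearOrder.lift' (Fintype.equivFin (Fin d → Bool)) (Equiv.injective _)
  have := card_family_le (fun x y : Fin d → Bool => hammingDist x y = 2) v t
    flips unflip (fun x y _ => unflip_flips x y)
    (Finset.univ.powersetCard 2)
    (fun x y hxy => Finset.mem_powersetCard.2 ⟨Finset.subset_univ _, by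
      rw [card_flips, hxy]⟩)
    (Finset.univ.filter (fun S : Finset (Fin d → Bool) =>
        v ∈ S ∧ S.card = t ∧ TwoLinked d S))
    (fun S hS => by
      obtain ⟨-, h1, h2, h3⟩ := Finset.mem_filter.1 hS
      exact ⟨h1, h2, linked_of_twoLinked S h3 v h1⟩)
  rwa [Finset.card_powersetCard, Finset.card_univ, Fintype.card_fin] at this



lemma choose_numeric (d t : ℕ) (ht : 1 ≤ t) :
    (((t * d.choose 2).choose (t-1) : ℕ) : ℝ) ≤ (Real.exp 1 * (d:ℝ)^2) ^ (t-1) := by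
  rcases eq_or_lt_of_le ht with h1 | h2
  · rw [← h1]; simp
  · set k := t - 1 with hk
    have hk1 : 1 ≤ k := by omega
    -- natural number inequality : t * C(d,2) ≤ k * d^2
    have hnat : t * d.choose 2 ≤ k * d ^ 2 := by
      have h2D : 2 * d.choose 2 = d * (d - 1) := by
        rcases d with _ | m
        · simp
        · rw [Nat.choose_two_right]
          simp only [Nat.add_sub_cancel]
          rw [Nat.mul_div_cancel' (Even.two_dvd (by rw [mul_comm]; exact Nat.even_mul_succ_self m))]
      have ht2 : t ≤ 2 * k := by omega
      have key : 2 * (t * d.choose 2) ≤ 2 * (k * d ^ 2) := by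
        calc 2 * (t * d.choose 2) = t * (2 * d.choose 2) := by ring
          _ = t * (d * (d-1)) := by rw [h2D]
          _ ≤ (2 * k) * (d * d) := Nat.mul_le_mul ht2 (Nat.mul_le_mul_left d (Nat.sub_le d 1))
          _ = 2 * (k * d ^ 2) := by ring
      omega
    have hfac : (0:ℝ) < (Nat.factorial k : ℝ) := by positivity
    have hs3 : ((k:ℝ))^k / (Nat.factorial k) ≤ Real.exp 1 ^ k := by
      have hsum := Real.sum_le_exp_of_nonneg (x := (k:ℝ)) (Nat.cast_nonneg k) (k+1)
      have hterm : ((k:ℝ))^k / (Nat.factorial k)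
          ≤ ∑ i ∈ Finset.range (k+1), (k:ℝ)^i / (Nat.factorial i) := by
        apply Finset.single_le_sum (f := fun i => (k:ℝ)^i / (Nat.factorial i))
        · intro i _; positivity
        · exact Finset.self_mem_range_succ k
      calc ((k:ℝ))^k / (Nat.factorial k) ≤ Real.exp k := hterm.trans hsum
        _ = Real.exp 1 ^ k := by rw [Real.exp_one_pow]
    calc (((t * d.choose 2).choose k : ℕ) : ℝ)
        ≤ ((t * d.choose 2 : ℕ) : ℝ)^k / (Nat.factorial k) := Nat.choose_le_pow_div k _
      _ ≤ ((k * d ^ 2 : ℕ) : ℝ)^k / (Nat.factorial k) := by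
          gcongr
      _ = ((k:ℝ)^k / (Nat.factorial k)) * ((d:ℝ)^2)^k := by
          push_cast
          rw [mul_pow]
          ring
      _ ≤ Real.exp 1 ^ k * ((d:ℝ)^2)^k := by
          gcongr
      _ = (Real.exp 1 * (d:ℝ)^2) ^ k := by rw [mul_pow]


def tauFun (z x : Fin d → Bool) : Fin d → Bool := fun i => xor (x i) (z i)

lemma tauFun_invol (z : Fin d → Bool) : Function.Involutive (tauFun z) := by
  intro x; funext i; simp [tauFun]

lemma tauFun_apply_self (z x : Fin d → Bool) :
    tauFun (tauFun z x) x = z := by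
  funext i; simp [tauFun]

lemma hammingDist_tauFun (z x y : Fin d → Bool) :
    hammingDist (tauFun z x) (tauFun z y) = hammingDist x y := by
  unfold hammingDist
  congr 1
  ext i
  simp only [Finset.mem_filter, Finset.mem_univ, true_and, tauFun]
  cases hz : z i <;> cases hx : x i <;> cases hy : y i <;> simp [hz, hx, hy]

lemma xor_mem_even {x z : Fin d → Bool} (hx : x ∈ evenFinset d) (hz : z ∈ evenFinset d) :
    tauFun z x ∈ evenFinset d := by
  simp only [evenFinset, Finset.mem_filter, Finset.mem_univ, true_and] at hx hz ⊢
  have key : (∑ i, if tauFun z x i then 1 else 0 : ℕ)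
      + 2 * (∑ i, if (x i && z i) then 1 else 0 : ℕ)
      = (∑ i, if x i then 1 else 0 : ℕ) + (∑ i, if z i then 1 else 0 : ℕ) := by
    rw [Finset.mul_sum, ← Finset.sum_add_distrib, ← Finset.sum_add_distrib]
    apply Finset.sum_congr rfl
    intro i _
    simp only [tauFun]
    have hbool : ∀ a b : Bool, ((if (xor a b) then 1 else 0 : ℕ)
        + 2 * (if (a && b) then 1 else 0 : ℕ))
        = (if a then 1 else 0 : ℕ) + (if b then 1 else 0 : ℕ) := by decide
    exact hbool (x i) (z i)
  have heven : Even ((∑ i, if tauFun z x i then 1 else 0 : ℕ)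
      + 2 * (∑ i, if (x i && z i) then 1 else 0 : ℕ)) := by
    rw [key]; exact hx.add hz
  have h2 : Even (2 * (∑ i, if (x i && z i) then 1 else 0 : ℕ)) := even_two_mul _
  exact (Nat.even_add.1 heven).2 h2

noncomputable def transIso (z : Fin d → Bool) (S : Finset (Fin d → Bool)) :
    ((distTwoGraph d).induce (S : Set (Fin d → Bool))) ≃g
      ((distTwoGraph d).induce ((S.image (tauFun z)) : Set (Fin d → Bool))) where
  toEquiv := Equiv.subtypeEquiv (Function.Involutive.toPerm _ (tauFun_invol z)) (by
    intro a
    simp only [Finset.coe_image, Set.mem_image, Finset.mem_coe,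
      Function.Involutive.coe_toPerm]
    constructor
    · exact fun h => ⟨a, h, rfl⟩
    · rintro ⟨b, hb, hba⟩
      rwa [← (tauFun_invol z).injective hba])
  map_rel_iff' := by
    intro a b
    simp only [Equiv.subtypeEquiv_apply, SimpleGraph.comap_adj,
      Function.Embedding.coe_subtype, Function.Involutive.coe_toPerm]
    show hammingDist (tauFun z ↑a) (tauFun z ↑b) = 2 ↔ hammingDist (↑a : Fin d → Bool) ↑b = 2
    rw [hammingDist_tauFun]

lemma sum_update_parity {m : ℕ} (x : Fin (m+1) → Bool) :
    (Even (∑ i, if (Function.update x 0 (!(x 0))) i then 1 else 0 : ℕ))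
      ↔ ¬ Even (∑ i, if x i then 1 else 0 : ℕ) := by
  set R := ∑ i ∈ Finset.univ.erase 0, (if x i then (1:ℕ) else 0) with hR
  have hx : (∑ i, if x i then (1:ℕ) else 0) = (if x 0 then 1 else 0) + R :=
    (Finset.add_sum_erase _ _ (Finset.mem_univ 0)).symm
  have hrest : ∑ i ∈ Finset.univ.erase 0,
      (if Function.update x 0 (!(x 0)) i then (1:ℕ) else 0) = R := by
    apply Finset.sum_congr rfl
    intro i hi
    rw [Function.update_of_ne (Finset.ne_of_mem_erase hi)]
  have hy : (∑ i, if Function.update x 0 (!(x 0)) i then (1:ℕ) else 0)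
      = (if !(x 0) then 1 else 0) + R := by
    have h := Finset.add_sum_erase Finset.univ
      (fun i => if Function.update x 0 (!(x 0)) i then (1:ℕ) else 0) (Finset.mem_univ 0)
    rw [← h]
    simp only [Function.update_self]
    rw [hrest]
  rw [hx, hy]
  cases h0 : x 0 <;> simp [Nat.even_add]

lemma card_evenFinset (d : ℕ) : (evenFinset d).card = 2^(d-1) := by
  rcases d with _ | m
  · decide
  · have htot : (evenFinset (m+1)).card
        + (Finset.univ.filter (fun x : Fin (m+1) → Bool =>
            ¬ Even (∑ i, if x i then 1 else 0 : ℕ))).card = 2^(m+1) := by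
      rw [evenFinset, Finset.card_filter_add_card_filter_not, Finset.card_univ]
      simp [Fintype.card_fun]
    have hbij : (evenFinset (m+1)).card
        = (Finset.univ.filter (fun x : Fin (m+1) → Bool =>
            ¬ Even (∑ i, if x i then 1 else 0 : ℕ))).card := by
      have hinv : ∀ a : Fin (m+1) → Bool,
          Function.update (Function.update a 0 (!(a 0))) 0
            (!(Function.update a 0 (!(a 0)) 0)) = a := by
        intro a
        rw [Function.update_self, Function.update_idem, Bool.not_not, Function.update_eq_self]
      refine Finset.card_bij' (fun x _ => Function.update x 0 (!(x 0)))
        (fun x _ => Function.update x 0 (!(x 0))) ?_ ?_ ?_ ?_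
      · intro a ha
        simp only [evenFinset, Finset.mem_filter, Finset.mem_univ, true_and] at ha ⊢
        exact fun hc => ((sum_update_parity a).1 hc) ha
      · intro a ha
        simp only [evenFinset, Finset.mem_filter, Finset.mem_univ, true_and] at ha ⊢
        exact (sum_update_parity a).2 ha
      · intro a ha
        exact hinv a
      · intro a ha
        exact hinv a
    rw [← hbij, pow_succ] at htot
    simp only [Nat.add_sub_cancel]
    generalize hA : (evenFinset (m+1)).card = a at htot ⊢
    generalize hC : (2:ℕ)^m = c at htot ⊢
    clear * - htot
    omega


lemma choose_numeric' (d t : ℕ) (ht : 1 ≤ t) :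
    (((t * d.choose 2).choose (t-1) : ℕ) : ℝ) ≤ (Real.exp 1 * (d:ℝ)^2) ^ (t-1) :=
  choose_numeric d t ht

end DefectAux

open DefectAux in
/-- For a defect type `T` of size `t` with at least one polymer of type `T`, the number
`n_T` of 2-linked `S ⊆ E` with distance-2 graph isomorphic to `T` satisfies
`2^(d−1)/t ≤ n_T ≤ (2^(d−1)/t)(e d²)^(t−1)`. -/
theorem defect_type_count_bounds (d t : ℕ) (ht : 1 ≤ t) (T : SimpleGraph (Fin t))
    (hconn : T.Connected)
    (hex : ∃ S : Finset (Fin d → Bool), S ⊆ evenFinset d ∧ TwoLinked d S ∧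
      Nonempty (((distTwoGraph d).induce (S : Set (Fin d → Bool))) ≃g T)) :
    (2 ^ (d - 1) : ℝ) / t ≤
      (Set.ncard {S : Finset (Fin d → Bool) | S ⊆ evenFinset d ∧ TwoLinked d S ∧
          Nonempty (((distTwoGraph d).induce (S : Set (Fin d → Bool))) ≃g T)} : ℝ) ∧
    (Set.ncard {S : Finset (Fin d → Bool) | S ⊆ evenFinset d ∧ TwoLinked d S ∧
        Nonempty (((distTwoGraph d).induce (S : Set (Fin d → Bool))) ≃g T)} : ℝ)
      ≤ (2 ^ (d - 1) : ℝ) / t * (Real.exp 1 * (d : ℝ) ^ 2) ^ (t - 1) := by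
  classical
  obtain ⟨S₀, hS₀E, hS₀tl, hS₀iso⟩ := hex
  have ht0 : (0:ℝ) < t := by exact_mod_cast ht
  have cardIso : ∀ S : Finset (Fin d → Bool),
      Nonempty (((distTwoGraph d).induce (S : Set (Fin d → Bool))) ≃g T) → S.card = t := by
    intro S hS
    obtain ⟨e⟩ := hS
    have h1 : Nat.card (↥(S : Set (Fin d → Bool))) = t := by
      rw [Nat.card_eq_fintype_card, Fintype.card_congr e.toEquiv, Fintype.card_fin]
    rwa [Nat.card_coe_set_eq, Set.ncard_coe_finset] at h1
  set Fam : Finset (Finset (Fin d → Bool)) := Finset.univ.filter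
    (fun S => S ⊆ evenFinset d ∧ TwoLinked d S ∧
      Nonempty (((distTwoGraph d).induce (S : Set (Fin d → Bool))) ≃g T)) with hFam
  have hn : Set.ncard {S : Finset (Fin d → Bool) | S ⊆ evenFinset d ∧ TwoLinked d S ∧
      Nonempty (((distTwoGraph d).induce (S : Set (Fin d → Bool))) ≃g T)} = Fam.card := by
    rw [← Set.ncard_coe_finset Fam]
    congr 1
    ext S
    simp [hFam]
  have hmem : ∀ S ∈ Fam, S ⊆ evenFinset d ∧ TwoLinked d S ∧
      Nonempty (((distTwoGraph d).induce (S : Set (Fin d → Bool))) ≃g T) := by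
    intro S hS
    rw [hFam, Finset.mem_filter] at hS
    exact hS.2
  have hcardmem : ∀ S ∈ Fam, S.card = t := fun S hS => cardIso S (hmem S hS).2.2
  -- double counting
  have hdc : ∑ w ∈ evenFinset d, (Fam.filter (fun S => w ∈ S)).card = t * Fam.card := by
    calc ∑ w ∈ evenFinset d, (Fam.filter (fun S => w ∈ S)).card
        = ∑ w ∈ evenFinset d, ∑ S ∈ Fam, (if w ∈ S then 1 else 0) :=
          Finset.sum_congr rfl fun w _ => Finset.card_filter _ _
      _ = ∑ S ∈ Fam, ∑ w ∈ evenFinset d, (if w ∈ S then 1 else 0) := Finset.sum_comm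
      _ = ∑ S ∈ Fam, t := by
          refine Finset.sum_congr rfl fun S hS => ?_
          rw [← Finset.card_filter, Finset.filter_mem_eq_inter,
            Finset.inter_eq_right.2 (hmem S hS).1, hcardmem S hS]
      _ = t * Fam.card := by rw [Finset.sum_const, smul_eq_mul, mul_comm]
  -- lower bound : every even vertex lies in some member
  have hS₀card : S₀.card = t := cardIso S₀ hS₀iso
  have hS₀ne : S₀.Nonempty := Finset.card_pos.1 (by omega)
  obtain ⟨s0, hs0⟩ := hS₀ne
  have hlow : ∀ w ∈ evenFinset d, 1 ≤ (Fam.filter (fun S => w ∈ S)).card := by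
    intro w hw
    refine Finset.card_pos.2 ⟨S₀.image (tauFun (tauFun w s0)), ?_⟩
    set z : Fin d → Bool := tauFun w s0 with hz
    have hzeven : z ∈ evenFinset d := xor_mem_even (hS₀E hs0) hw
    have hFmem : S₀.image (tauFun z) ∈ Fam := by
      rw [hFam]
      refine Finset.mem_filter.2 ⟨Finset.mem_univ _, ?_, ?_, ?_⟩
      · intro y hy
        obtain ⟨x, hx, rfl⟩ := Finset.mem_image.1 hy
        exact xor_mem_even (hS₀E hx) hzeven
      · exact (SimpleGraph.Iso.connected_iff (transIso z S₀)).1 hS₀tl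
      · exact ⟨(transIso z S₀).symm.trans hS₀iso.some⟩
    refine Finset.mem_filter.2 ⟨hFmem, ?_⟩
    exact Finset.mem_image.2 ⟨s0, hs0, tauFun_apply_self w s0⟩
  have hlower_nat : 2^(d-1) ≤ t * Fam.card := by
    calc (2:ℕ)^(d-1) = (evenFinset d).card := (card_evenFinset d).symm
      _ = ∑ w ∈ evenFinset d, 1 := by rw [Finset.sum_const, smul_eq_mul, mul_one]
      _ ≤ ∑ w ∈ evenFinset d, (Fam.filter (fun S => w ∈ S)).card := Finset.sum_le_sum hlow
      _ = t * Fam.card := hdc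
  have hupper_nat : t * Fam.card ≤ 2^(d-1) * ((t * d.choose 2).choose (t-1)) := by
    calc t * Fam.card = ∑ w ∈ evenFinset d, (Fam.filter (fun S => w ∈ S)).card := hdc.symm
      _ ≤ ∑ _w ∈ evenFinset d, ((t * d.choose 2).choose (t-1)) := by
          apply Finset.sum_le_sum
          intro w _
          refine le_trans ?_ (count_through_vertex d t w)
          apply Finset.card_le_card
          intro S hS
          obtain ⟨hSF, hwS⟩ := Finset.mem_filter.1 hS
          exact Finset.mem_filter.2
            ⟨Finset.mem_univ _, hwS, hcardmem S hSF, (hmem S hSF).2.1⟩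
      _ = 2^(d-1) * ((t * d.choose 2).choose (t-1)) := by
          rw [Finset.sum_const, smul_eq_mul, card_evenFinset]
  constructor
  · rw [hn, div_le_iff₀ ht0]
    calc (2:ℝ)^(d-1) = ((2^(d-1) : ℕ) : ℝ) := by push_cast; ring
      _ ≤ ((t * Fam.card : ℕ) : ℝ) := by exact_mod_cast hlower_nat
      _ = (Fam.card : ℝ) * t := by push_cast; ring
  · rw [hn]
    have hch := choose_numeric d t ht
    have h1 : (Fam.card : ℝ) * t ≤ 2^(d-1) * (((t * d.choose 2).choose (t-1) : ℕ) : ℝ) := by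
      calc (Fam.card:ℝ) * t = ((t * Fam.card : ℕ):ℝ) := by push_cast; ring
        _ ≤ ((2^(d-1) * ((t * d.choose 2).choose (t-1)) : ℕ):ℝ) := by
            exact_mod_cast hupper_nat
        _ = 2^(d-1) * (((t * d.choose 2).choose (t-1) : ℕ) : ℝ) := by push_cast; ring
    have h2 : (Fam.card : ℝ) ≤ 2^(d-1) / t * (((t * d.choose 2).choose (t-1) : ℕ) : ℝ) := by
      rw [div_mul_eq_mul_div, le_div_iff₀ ht0]
      linarith
    calc (Fam.card:ℝ) ≤ 2^(d-1)/t * (((t * d.choose 2).choose (t-1) : ℕ) : ℝ) := h2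
      _ ≤ 2^(d-1)/t * (Real.exp 1 * (d:ℝ)^2)^(t-1) := by
          apply mul_le_mul_of_nonneg_left hch (by positivity)
end
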